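/- Let N ≥ 1 be a natural number with N coprime to φ(N). For all messages m₁, m₂ ∈ ℕ with m₁ < N and m₂ < N and all units r₁, r₂ of ZMod (N^2), if (1+N)^{m₁} · r₁^N = (1+N)^{m₂} · r₂^N in ZMod (N^2), then m₁ = m₂. -/
import Mathlib

/-- `(1+N)^m = 1 + m*N` in `ZMod (N^2)`. -/
lemma paillier_one_add_pow (N m : ℕ) :
    ((1 : ZMod (N ^ 2)) + (N : ZMod (N ^ 2))) ^ m
      = 1 + (m : ZMod (N ^ 2)) * (N : ZMod (N ^ 2)) := by
  have hNN : (N : ZMod (N ^ 2)) * (N : ZMod (N ^ 2)) = 0 := by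
    have : ((N * N : ℕ) : ZMod (N ^ 2)) = 0 := by
      rw [← sq]; exact ZMod.natCast_self _
    push_cast at this
    exact this
  induction m with
  | zero => simp
  | succ m ih =>
    rw [pow_succ ((1 : ZMod (N ^ 2)) + (N : ZMod (N ^ 2))) m, ih]
    push_cast
    linear_combination (m : ZMod (N ^ 2)) * hNN

/-- `φ(N²) = N·φ(N)`. -/
lemma paillier_totient_sq (N : ℕ) (hN : 1 ≤ N) :
    Nat.totient (N ^ 2) = N * Nat.totient N := by
  have h := Nat.totient_gcd_mul_totient_mul N N
  rw [Nat.gcd_self] at h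
  have hpos : 0 < Nat.totient N := Nat.totient_pos.2 hN
  rw [sq]
  nlinarith [h]

/-- Correctness of Paillier decryption: a ciphertext uniquely determines its
message in `{0, …, N−1}`, provided `gcd(N, φ(N)) = 1`. -/
theorem paillier_decrypt_unique (N : ℕ) (hN : 1 ≤ N) (hco : Nat.Coprime N (Nat.totient N))
    (m₁ m₂ : ℕ) (hm₁ : m₁ < N) (hm₂ : m₂ < N) (r₁ r₂ : (ZMod (N ^ 2))ˣ)
    (h : ((1 : ZMod (N ^ 2)) + (N : ZMod (N ^ 2))) ^ m₁ * (r₁ : ZMod (N ^ 2)) ^ N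
        = ((1 : ZMod (N ^ 2)) + (N : ZMod (N ^ 2))) ^ m₂ * (r₂ : ZMod (N ^ 2)) ^ N) :
    m₁ = m₂ := by
  set φN := Nat.totient N with hφN
  -- every `N`-th power of a unit is killed by raising to `φN`
  have hkey : ∀ r : (ZMod (N ^ 2))ˣ, ((r : ZMod (N ^ 2)) ^ N) ^ φN = 1 := by
    intro r
    have h1 : r ^ (N * φN) = 1 := by
      rw [← paillier_totient_sq N hN]
      exact ZMod.pow_totient r
    have := congrArg (Units.val) h1
    push_cast [pow_mul] at this
    simpa using this
  -- raise the hypothesis to the power `φN`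
  have h2 : ((1 : ZMod (N ^ 2)) + (N : ZMod (N ^ 2))) ^ (m₁ * φN)
      = ((1 : ZMod (N ^ 2)) + (N : ZMod (N ^ 2))) ^ (m₂ * φN) := by
    have := congrArg (· ^ φN) h
    simpa [mul_pow, pow_mul, hkey] using this
  rw [paillier_one_add_pow, paillier_one_add_pow] at h2
  have h3 : ((m₁ * φN * N : ℕ) : ZMod (N ^ 2)) = ((m₂ * φN * N : ℕ) : ZMod (N ^ 2)) := by
    push_cast
    push_cast at h2
    linear_combination h2
  rw [ZMod.natCast_eq_natCast_iff] at h3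
  -- cancel one factor of `N` from the modulus
  have h4 : m₁ * φN ≡ m₂ * φN [MOD N] := by
    have hd := (Nat.modEq_iff_dvd).mp h3
    have hN0 : (N : ℤ) ≠ 0 := by
      exact_mod_cast (by omega : N ≠ 0)
    rw [show ((m₂ * φN * N : ℕ) : ℤ) - ((m₁ * φN * N : ℕ) : ℤ)
          = ((m₂ : ℤ) * φN - m₁ * φN) * N by push_cast; ring,
        show ((N ^ 2 : ℕ) : ℤ) = N * N by push_cast; ring] at hd
    have hdvd := (mul_dvd_mul_iff_right hN0).mp hd
    exact (Nat.modEq_iff_dvd).mpr (by push_cast; exact hdvd)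
  -- cancel `φN` using the coprimality assumption
  have h5 : m₁ ≡ m₂ [MOD N] := h4.cancel_right_of_coprime hco
  exact Nat.ModEq.eq_of_lt_of_lt h5 hm₁ hm₂
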